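/- arXiv:1705.01744 — 2 statements merged into one kernel-verified Lean document; each statement's English description precedes it below -/
import Mathlib

section
/- For every cycle C_n with n ≥ 3, the incidence graph I_{C_n} is isomorphic to the square of the cycle C_{2n}. -/
open SimpleGraph

variable {V : Type*}

/-- An incidence of a graph `G`: a pair `(v, e)` where `e` is an edge of `G` and `v ∈ e`. -/
def Inc (G : SimpleGraph V) : Type _ :=
  {p : V × Sym2 V // p.2 ∈ G.edgeSet ∧ p.1 ∈ p.2}

/-- The incidence graph `I_G` of `G`: vertices are incidences of `G`, with `(v,e)` and `(w,f)`
adjacent whenever they are distinct and `v = w`, or `e = f`, or the pair `vw` equals `e` or `f`. -/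
def incGraph (G : SimpleGraph V) : SimpleGraph (Inc G) where
  Adj a b := a ≠ b ∧ (a.1.1 = b.1.1 ∨ a.1.2 = b.1.2 ∨
      s(a.1.1, b.1.1) = a.1.2 ∨ s(a.1.1, b.1.1) = b.1.2)
  symm := by
    constructor
    rintro a b ⟨hab, h⟩
    refine ⟨hab.symm, ?_⟩
    rw [Sym2.eq_swap (a := b.1.1) (b := a.1.1)]
    rcases h with h | h | h | h
    · exact Or.inl h.symm
    · exact Or.inr (Or.inl h.symm)
    · exact Or.inr (Or.inr (Or.inr h))
    · exact Or.inr (Or.inr (Or.inl h))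
  loopless := ⟨fun _ h => h.1 rfl⟩

/-- `G` admits an incidence `p`-colouring. -/
def IncColorable (G : SimpleGraph V) (p : ℕ) : Prop :=
  (incGraph G).Colorable p

/-- `G` is incidence `k`-choosable. -/
def IncChoosable (G : SimpleGraph V) (k : ℕ) : Prop :=
  ∀ L : Inc G → Finset ℕ, (∀ i, (L i).card = k) →
    ∃ c : Inc G → ℕ, (∀ i, c i ∈ L i) ∧ ∀ i j, (incGraph G).Adj i j → c i ≠ c j

/-- The incidence chromatic number `χᵢ(G)`. -/
noncomputable def incChromaticNumber (G : SimpleGraph V) : ℕ :=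
  sInf {p | IncColorable G p}

/-- The incidence choice number `chᵢ(G)`. -/
noncomputable def incChoiceNumber (G : SimpleGraph V) : ℕ :=
  sInf {k | IncChoosable G k}

/-- The maximum degree `Δ(G)` of a finite graph. -/
noncomputable def maxDeg [Fintype V] (G : SimpleGraph V) : ℕ :=
  Finset.univ.sup fun v => (G.neighborSet v).ncard

/-- The square `H²` of a graph: vertices at distance 1 or 2 are adjacent. -/
def gsquare {W : Type*} (H : SimpleGraph W) : SimpleGraph W where
  Adj a b := a ≠ b ∧ H.Reachable a b ∧ H.dist a b ≤ 2
  symm := by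
    constructor
    rintro a b ⟨h1, h2, h3⟩
    exact ⟨h1.symm, h2.symm, by rwa [SimpleGraph.dist_comm]⟩
  loopless := ⟨fun _ h => h.1 rfl⟩

/-!
Number the edges of `C_n` as `e_q = {q, q+1}` and put the incidence `(q + b, e_q)`, `b ∈ {0, 1}`,
at position `2q + b` of `C_{2n}`, so that going once around `C_{2n}` visits the incidences in the
order `(q, e_q), (q+1, e_q), (q+1, e_{q+1}), …`. Positions one apart share an edge or a vertex,
positions two apart are incidences `(v, e)`, `(w, f)` with `vw ∈ {e, f}`, and for `n ≥ 3` no other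
two incidences are adjacent.
-/

theorem incGraph_adj {G : SimpleGraph V} {a b : Inc G} :
    (incGraph G).Adj a b ↔ a ≠ b ∧ (a.1.1 = b.1.1 ∨ a.1.2 = b.1.2 ∨
      s(a.1.1, b.1.1) = a.1.2 ∨ s(a.1.1, b.1.1) = b.1.2) := Iff.rfl

theorem gsquare_adj_iff {W : Type*} (H : SimpleGraph W) {a b : W} :
    (gsquare H).Adj a b ↔ a ≠ b ∧ (H.Adj a b ∨ ∃ c, H.Adj a c ∧ H.Adj c b) := by
  refine ⟨fun ⟨hne, hreach, hdist⟩ => ⟨hne, ?_⟩, ?_⟩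
  · obtain ⟨p, hp⟩ := hreach.exists_walk_length_eq_dist
    match p, hp with
    | .nil, _ => exact absurd rfl hne
    | .cons h .nil, _ => exact .inl h
    | .cons h (.cons h' .nil), _ => exact .inr ⟨_, h, h'⟩
    | .cons _ (.cons _ (.cons _ _)), hp => simp only [Walk.length_cons] at hp; omega
  · rintro ⟨hne, h | ⟨c, h, h'⟩⟩
    · exact ⟨hne, h.reachable, (dist_le h.toWalk).trans (by simp)⟩
    · let p := Walk.cons h h'.toWalk
      exact ⟨hne, p.reachable, (dist_le p).trans (by simp [p])⟩

section Cycle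

variable {N : ℕ} [NeZero N]

theorem Fin.add_one_ne_self (hN : 1 < N) (a : Fin N) : a + 1 ≠ a := by
  have h1 : (1 : Fin N).val = 1 := Nat.mod_eq_of_lt hN
  have := a.isLt
  rw [Ne, Fin.ext_iff, Fin.val_add_eq_ite, h1]
  split_ifs <;> omega

theorem Fin.add_one_add_one_ne_self (hN : 2 < N) (a : Fin N) : a + 1 + 1 ≠ a := by
  have h1 : (1 : Fin N).val = 1 := Nat.mod_eq_of_lt (show 1 < N by omega)
  have := a.isLt
  rw [Ne, Fin.ext_iff, Fin.val_add_eq_ite, Fin.val_add_eq_ite, h1]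
  split_ifs <;> omega

theorem cycleGraph_adj_iff_eq_add_one (hN : 1 < N) {u v : Fin N} :
    (cycleGraph N).Adj u v ↔ v = u + 1 ∨ u = v + 1 := by
  obtain ⟨k, rfl⟩ : ∃ k, N = k + 2 := ⟨N - 2, by omega⟩
  rw [cycleGraph_adj, sub_eq_iff_eq_add', sub_eq_iff_eq_add']
  exact or_comm

theorem gsquare_cycleGraph_adj_iff (hN : 2 < N) {u v : Fin N} :
    (gsquare (cycleGraph N)).Adj u v ↔
      v = u + 1 ∨ u = v + 1 ∨ v = u + 1 + 1 ∨ u = v + 1 + 1 := by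
  have hne₁ := Fin.add_one_ne_self (show 1 < N by omega)
  have hne₂ := Fin.add_one_add_one_ne_self hN
  simp only [gsquare_adj_iff, cycleGraph_adj_iff_eq_add_one (show 1 < N by omega)]
  constructor
  · rintro ⟨hne, (h | h) | ⟨c, hc | hc, hv | hv⟩⟩ <;> grind
  · rintro (rfl | rfl | rfl | rfl)
    · exact ⟨(hne₁ u).symm, .inl (.inl rfl)⟩
    · exact ⟨hne₁ v, .inl (.inr rfl)⟩
    · exact ⟨(hne₂ u).symm, .inr ⟨u + 1, .inl rfl, .inl rfl⟩⟩
    · exact ⟨hne₂ v, .inr ⟨v + 1, .inr rfl, .inr rfl⟩⟩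

end Cycle

section Incidences

variable {n : ℕ}

def cyclePos (n : ℕ) : Fin n × Fin 2 ≃ Fin (2 * n) :=
  finProdFinEquiv.trans (finCongr (Nat.mul_comm n 2))

theorem cyclePos_val (q : Fin n) (b : Fin 2) : (cyclePos n (q, b)).val = b.val + 2 * q.val :=
  rfl

variable [NeZero n]

theorem cyclePos_zero_add_one (hn : 1 < n) (q : Fin n) :
    cyclePos n (q, 0) + 1 = cyclePos n (q, 1) := by
  have h1 : (1 : Fin (2 * n)).val = 1 := Nat.mod_eq_of_lt (show 1 < 2 * n by omega)
  have := q.isLt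
  rw [Fin.ext_iff, Fin.val_add_eq_ite, cyclePos_val, cyclePos_val, h1, Fin.val_zero, Fin.val_one]
  split_ifs <;> omega

theorem cyclePos_one_add_one (hn : 1 < n) (q : Fin n) :
    cyclePos n (q, 1) + 1 = cyclePos n (q + 1, 0) := by
  have h1 : (1 : Fin n).val = 1 := Nat.mod_eq_of_lt hn
  have h1' : (1 : Fin (2 * n)).val = 1 := Nat.mod_eq_of_lt (show 1 < 2 * n by omega)
  have := q.isLt
  rw [Fin.ext_iff, Fin.val_add_eq_ite, cyclePos_val, cyclePos_val, Fin.val_add_eq_ite, h1, h1',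
    Fin.val_zero, Fin.val_one]
  split_ifs <;> omega

def cycleInc (hn : 1 < n) (x : Fin n × Fin 2) : Inc (cycleGraph n) :=
  ⟨(![x.1, x.1 + 1] x.2, s(x.1, x.1 + 1)), (cycleGraph_adj_iff_eq_add_one hn).2 (.inl rfl), by
    obtain ⟨q, b⟩ := x
    fin_cases b <;> simp⟩

theorem cycleInc_surjective (hn : 1 < n) : Function.Surjective (cycleInc hn) := by
  rintro ⟨⟨v, e⟩, he, hv⟩
  induction e using Sym2.ind with | h x y => ?_
  dsimp only at he hv
  rw [mem_edgeSet, cycleGraph_adj_iff_eq_add_one hn] at he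
  rcases he with rfl | rfl <;> rcases Sym2.mem_iff.1 hv with rfl | rfl
  · exact ⟨(v, 0), rfl⟩
  · exact ⟨(x, 1), rfl⟩
  · exact ⟨(y, 1), Subtype.ext (Prod.ext rfl Sym2.eq_swap)⟩
  · exact ⟨(v, 0), Subtype.ext (Prod.ext rfl Sym2.eq_swap)⟩

theorem cycleInc_injective (hn : 2 < n) : Function.Injective (cycleInc hn.le) := by
  rintro ⟨q, b⟩ ⟨r, c⟩ h
  have he : s(q, q + 1) = s(r, r + 1) := congrArg (fun a => a.1.2) h
  have hv : ![q, q + 1] b = ![r, r + 1] c := congrArg (fun a => a.1.1) h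
  obtain rfl : q = r := by
    rcases Sym2.eq_iff.1 he with ⟨hqr, -⟩ | ⟨rfl, hr⟩
    · exact hqr
    · exact absurd hr (Fin.add_one_add_one_ne_self hn r)
  fin_cases b <;> fin_cases c <;> simp_all [show n ≠ 1 by omega]

theorem incGraph_cycleInc_adj_iff (hn : 2 < n) (x y : Fin n × Fin 2) :
    (incGraph (cycleGraph n)).Adj (cycleInc hn.le x) (cycleInc hn.le y) ↔
      (gsquare (cycleGraph (2 * n))).Adj (cyclePos n x) (cyclePos n y) := by
  obtain ⟨q, b⟩ := x
  obtain ⟨r, c⟩ := y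
  rw [gsquare_cycleGraph_adj_iff (by omega), incGraph_adj, (cycleInc_injective hn).ne_iff]
  fin_cases b <;> fin_cases c <;>
    simp only [Fin.zero_eta, Fin.mk_one, cycleInc, Matrix.cons_val_zero, Matrix.cons_val_one,
      Matrix.cons_val_fin_one, cyclePos_zero_add_one hn.le, cyclePos_one_add_one hn.le,
      (cyclePos n).apply_eq_iff_eq, Prod.mk.injEq, Sym2.eq_iff, ne_eq] <;>
    grind [Fin.add_one_add_one_ne_self hn, Fin.add_one_ne_self hn.le]

end Incidences

theorem stmt7 (n : ℕ) (hn : 3 ≤ n) :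
    Nonempty (incGraph (cycleGraph n) ≃g gsquare (cycleGraph (2 * n))) := by
  have : NeZero n := ⟨by omega⟩
  let inc := Equiv.ofBijective _ ⟨cycleInc_injective hn, cycleInc_surjective (by omega)⟩
  refine ⟨⟨inc.symm.trans (cyclePos n), fun {a b} => ?_⟩⟩
  obtain ⟨x, rfl⟩ := inc.surjective a
  obtain ⟨y, rfl⟩ := inc.surjective b
  rw [Equiv.trans_apply, Equiv.trans_apply, Equiv.symm_apply_apply, Equiv.symm_apply_apply]
  exact (incGraph_cycleInc_adj_iff hn x y).symm
end

section
/- Let T be a tree, k ≥ 1 an integer, and L a list assignment with |L(v,vu)| ≥ Δ(T) + k for every incidence (v,vu) of T. Then for every set of k incidences (x_1,x_1y_1),…,(x_k,x_ky_k) of T and colours α_1,…,α_k with α_i ∈ L(x_i,x_iy_i) for all i and α_i ≠ α_j whenever (x_i,x_iy_i) and (x_j,x_jy_j) are adjacent, there exists an L-list incidence colouring σ of T with σ(x_i,x_iy_i) = α_i for all i. -/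
open SimpleGraph

variable {V : Type*}

/-!
Root `T` at the vertex `r` of the first prescribed incidence and colour the remaining incidences
greedily, level by level from the root: at depth `d` first the incidences `(v, vu)` pointing to the
parent `u`, then those pointing to the children. When `(v, vu)` points to the parent, its
neighbours coloured earlier all sit at `u`: at most `Δ` of them. When it points to a child, they
are the other incidences at `v` and the incidence from the parent of `v` to `v`: again at most `Δ`.
Together with the `k - 1` prescribed incidences other than the first one, which precedes everything,
at most `Δ + k - 1` colours are blocked.
-/

open Finset Function

open scoped Classical

namespace SimpleGraph

variable {α β γ : Type*}

def IsListColoringOn (H : SimpleGraph α) (L : α → Finset β) (S : Finset α) (σ : α → β) : Prop :=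
  (∀ a ∈ S, σ a ∈ L a) ∧ ∀ a ∈ S, ∀ b ∈ S, H.Adj a b → σ a ≠ σ b

variable [Fintype α] {H : SimpleGraph α} {L : α → Finset β}

theorem IsListColoringOn.exists_update_insert {S : Finset α} {σ : α → β}
    (h : H.IsListColoringOn L S σ) {a : α} (ha : #{b | H.Adj a b ∧ b ∈ S} < #(L a)) :
    ∃ c, H.IsListColoringOn L (insert a S) (update σ a c) := by
  obtain ⟨c, hcL, hc⟩ := exists_mem_notMem_of_card_lt_card (s := image σ {b | H.Adj a b ∧ b ∈ S})
    (card_image_le.trans_lt ha)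
  have hfresh : ∀ b ∈ S, H.Adj a b → c ≠ σ b := fun b hb hab hcb =>
    hc (mem_image.2 ⟨b, mem_filter.2 ⟨mem_univ _, hab, hb⟩, hcb.symm⟩)
  refine ⟨c, fun x hx => ?_, fun x hx y hy hxy => ?_⟩
  · by_cases hxa : x = a
    · subst hxa
      simpa using hcL
    · rw [update_of_ne hxa]
      exact h.1 x (mem_of_mem_insert_of_ne hx hxa)
  · by_cases hxa : x = a <;> by_cases hya : y = a
    · subst hxa hya
      exact absurd hxy (H.loopless.irrefl _)
    · subst hxa
      rw [update_self, update_of_ne hya]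
      exact hfresh y (mem_of_mem_insert_of_ne hy hya) hxy
    · subst hya
      rw [update_self, update_of_ne hxa]
      exact (hfresh x (mem_of_mem_insert_of_ne hx hxa) hxy.symm).symm
    · rw [update_of_ne hxa, update_of_ne hya]
      exact h.2 x (mem_of_mem_insert_of_ne hx hxa) y (mem_of_mem_insert_of_ne hy hya) hxy

theorem exists_isListColoringOn_univ_extending [LinearOrder γ] (P : Finset α) (f : α → β)
    (rank : α → γ) (hf : H.IsListColoringOn L P f)
    (hL : ∀ a ∉ P, #{b | H.Adj a b ∧ (b ∈ P ∨ rank b ≤ rank a)} < #(L a)) :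
    ∃ σ, H.IsListColoringOn L univ σ ∧ ∀ a ∈ P, σ a = f a := by
  suffices ∀ s : Finset α, ∃ σ, H.IsListColoringOn L (P ∪ s) σ ∧ ∀ a ∈ P, σ a = f a by
    simpa only [union_eq_right.2 (subset_univ P)] using this univ
  intro s
  induction s using Finset.induction_on_max_value rank with
  | empty => exact ⟨f, by simpa using hf, fun _ _ => rfl⟩
  | insert a s _ hmax ih =>
    obtain ⟨σ, hσ, hσP⟩ := ih
    rw [union_insert]
    by_cases haP : a ∈ P
    · exact ⟨σ, by rwa [insert_eq_of_mem (mem_union_left _ haP)], hσP⟩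
    have hcard : #{b | H.Adj a b ∧ b ∈ P ∪ s} < #(L a) := by
      refine (card_le_card fun b hb => ?_).trans_lt (hL a haP)
      simp only [mem_filter, mem_univ, true_and, mem_union] at hb ⊢
      exact ⟨hb.1, hb.2.imp_right (hmax b)⟩
    obtain ⟨c, hc⟩ := hσ.exists_update_insert hcard
    refine ⟨update σ a c, hc, fun b hb => ?_⟩
    rw [update_of_ne (ne_of_mem_of_not_mem hb haP), hσP b hb]

theorem card_filter_adj_and_mem_or_le_lt [LinearOrder γ] {P : Finset α} {rank : α → γ} {c : α}
    (hc : c ∈ P) (hmin : ∀ a, rank c ≤ rank a) (a : α) :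
    #{b | H.Adj a b ∧ (b ∈ P ∨ rank b ≤ rank a)} < #{b | H.Adj a b ∧ rank b ≤ rank a} + #P :=
  calc #{b | H.Adj a b ∧ (b ∈ P ∨ rank b ≤ rank a)}
      ≤ #(({b | H.Adj a b ∧ rank b ≤ rank a} : Finset α) ∪ P.erase c) := card_le_card fun b hb => by
        simp only [mem_filter, mem_univ, true_and, mem_union, mem_erase] at hb ⊢
        obtain ⟨hab, hbP | hle⟩ := hb
        · by_cases hbc : b = c
          · exact Or.inl ⟨hab, hbc ▸ hmin a⟩
          · exact Or.inr ⟨hbc, hbP⟩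
        · exact Or.inl ⟨hab, hle⟩
    _ ≤ #{b | H.Adj a b ∧ rank b ≤ rank a} + #(P.erase c) := card_union_le _ _
    _ < #{b | H.Adj a b ∧ rank b ≤ rank a} + #P := by
      rw [card_erase_of_mem hc]
      have := card_pos.2 ⟨c, hc⟩
      omega

theorem IsTree.eq_of_adj_of_dist_lt {T : SimpleGraph V} (hT : T.IsTree) (r : V)
    {x y y' : V} (hy : T.Adj y x) (hy' : T.Adj y' x) (h : T.dist r y < T.dist r x)
    (h' : T.dist r y' < T.dist r x) : y = y' := by
  have hpath : ∀ z (hz : T.Adj z x), T.dist r z < T.dist r x →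
      ∃ p : T.Walk r z, (p.concat hz).IsPath := by
    intro z hz hlt
    obtain ⟨p, hp, hlen⟩ := hT.connected.exists_path_of_dist r z
    refine ⟨p, hp.concat (fun hx => ?_) hz⟩
    have := (T.dist_le (p.takeUntil x hx)).trans (p.length_takeUntil_le_length hx)
    omega
  obtain ⟨p, hp⟩ := hpath y hy h
  obtain ⟨q, hq⟩ := hpath y' hy' h'
  exact (Walk.concat_inj (congrArg Subtype.val
    ((hT.isAcyclic.subsingleton_path r x).elim ⟨_, hp⟩ ⟨_, hq⟩))).1

end SimpleGraph

open SimpleGraph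

namespace Inc

variable {G : SimpleGraph V}

noncomputable instance [Fintype V] : Fintype (Inc G) := Subtype.fintype _

noncomputable def other (a : Inc G) : V := Sym2.Mem.other a.2.2

lemma mk_other (a : Inc G) : s(a.1.1, a.other) = a.1.2 := Sym2.other_spec _

lemma adj_other (a : Inc G) : G.Adj a.1.1 a.other := by
  simpa [← mk_other a] using a.2.1

lemma ext_other {a b : Inc G} (h : a.1.1 = b.1.1) (h' : a.other = b.other) : a = b :=
  Subtype.ext (Prod.ext h (by rw [← mk_other, ← mk_other, h, h']))

lemma incGraph_adj_cases {a b : Inc G} (h : (incGraph G).Adj a b) :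
    b.1.1 = a.1.1 ∨ b.1.1 = a.other ∨ b.other = a.1.1 := by
  obtain ⟨-, h | h | h | h⟩ := h
  · exact Or.inl h.symm
  · have hb := b.2.2
    rw [← h, ← mk_other a, Sym2.mem_iff] at hb
    exact hb.imp_right Or.inl
  · rw [← mk_other a] at h
    exact Or.inr (Or.inl (Sym2.congr_right.1 h))
  · rw [← mk_other b, Sym2.eq_swap] at h
    exact Or.inr (Or.inr (Sym2.congr_right.1 h).symm)

lemma card_filter_fst_eq_le_maxDeg [Fintype V] (v : V) : #{b : Inc G | b.1.1 = v} ≤ maxDeg G :=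
  calc #{b : Inc G | b.1.1 = v}
      ≤ #(G.neighborSet v).toFinset := by
        refine card_le_card_of_injOn other (fun b hb => ?_) (fun b hb b' hb' he => ?_)
        · simpa [← (mem_filter.1 hb).2] using adj_other b
        · exact ext_other (((mem_filter.1 hb).2).trans (mem_filter.1 hb').2.symm) he
    _ = (G.neighborSet v).ncard := (Set.ncard_eq_toFinset_card' _).symm
    _ ≤ maxDeg G := le_sup (f := fun v => (G.neighborSet v).ncard) (mem_univ v)

/-- The order in which the greedy colouring treats the incidences of a tree rooted at `r`: at depth
`d`, rank `2 d` for the incidences pointing to the parent, `2 d + 1` for those pointing to a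
child. -/
noncomputable def rank (r : V) (a : Inc G) : ℕ :=
  2 * G.dist r a.1.1 + if G.dist r a.1.1 < G.dist r a.other then 1 else 0

variable (r : V)

lemma two_mul_dist_le_rank (a : Inc G) : 2 * G.dist r a.1.1 ≤ a.rank r := Nat.le_add_right _ _

lemma rank_eq_of_dist_lt {a : Inc G} (h : G.dist r a.other < G.dist r a.1.1) :
    a.rank r = 2 * G.dist r a.1.1 := by
  simp [rank, h.not_gt]

lemma rank_eq_of_lt_dist {a : Inc G} (h : G.dist r a.1.1 < G.dist r a.other) :
    a.rank r = 2 * G.dist r a.1.1 + 1 := by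
  simp [rank, h]

end Inc

namespace SimpleGraph.IsTree

open Inc

variable {T : SimpleGraph V} (hT : T.IsTree) (r : V)
include hT

lemma incGraph_adj_fst_eq_other {a b : Inc T} (hab : (incGraph T).Adj a b)
    (hdown : T.dist r a.1.1 = T.dist r a.other + 1) (hrank : b.rank r ≤ a.rank r) :
    b.1.1 = a.other := by
  have hra := rank_eq_of_dist_lt r (a := a) (by omega)
  have hrb := two_mul_dist_le_rank r b
  rcases incGraph_adj_cases hab with h | h | h
  · have hb := adj_other b
    rw [h] at hb
    rcases hT.dist_eq_dist_add_one_of_adj r hb with hd | hd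
    · exact absurd (ext_other h (hT.eq_of_adj_of_dist_lt r hb.symm (adj_other a).symm
        (by omega) (by omega))).symm hab.ne
    · have := rank_eq_of_lt_dist r (a := b) (by rw [h]; omega)
      rw [h] at this
      omega
  · exact h
  · have hb := adj_other b
    rw [h] at hb
    rcases hT.dist_eq_dist_add_one_of_adj r hb with hd | hd
    · omega
    · exact hT.eq_of_adj_of_dist_lt r hb (adj_other a).symm (by omega) (by omega)

lemma incGraph_adj_fst_eq_or_parent {a b : Inc T} (hab : (incGraph T).Adj a b)
    (hup : T.dist r a.other = T.dist r a.1.1 + 1) (hrank : b.rank r ≤ a.rank r) :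
    b.1.1 = a.1.1 ∨ b.other = a.1.1 ∧ T.dist r b.1.1 < T.dist r a.1.1 := by
  have hra := rank_eq_of_lt_dist r (a := a) (by omega)
  have hrb := two_mul_dist_le_rank r b
  rcases incGraph_adj_cases hab with h | h | h
  · exact Or.inl h
  · rw [h] at hrb
    omega
  · have hb := adj_other b
    rw [h] at hb
    have := hT.dist_eq_dist_add_one_of_adj r hb
    exact Or.inr ⟨h, by omega⟩

lemma card_filter_other_eq_dist_lt_le_one (v : V) [Fintype V] :
    #{b : Inc T | b.other = v ∧ T.dist r b.1.1 < T.dist r v} ≤ 1 := by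
  refine card_le_one.2 fun b hb b' hb' => ?_
  obtain ⟨hbv, hb⟩ := (mem_filter.1 hb).2
  obtain ⟨hbv', hb'⟩ := (mem_filter.1 hb').2
  have h := adj_other b
  have h' := adj_other b'
  rw [hbv] at h
  rw [hbv'] at h'
  exact ext_other (hT.eq_of_adj_of_dist_lt r h h' hb hb') (hbv.trans hbv'.symm)

lemma card_filter_incGraph_adj_rank_le [Fintype V] (a : Inc T) :
    #{b | (incGraph T).Adj a b ∧ b.rank r ≤ a.rank r} ≤ maxDeg T := by
  rcases hT.dist_eq_dist_add_one_of_adj r (adj_other a) with hdown | hup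
  · refine (card_le_card fun b hb => ?_).trans (card_filter_fst_eq_le_maxDeg a.other)
    obtain ⟨hab, hrank⟩ := (mem_filter.1 hb).2
    exact mem_filter.2 ⟨mem_univ _, hT.incGraph_adj_fst_eq_other r hab hdown hrank⟩
  · have ha : a ∈ ({b | b.1.1 = a.1.1} : Finset (Inc T)) := mem_filter.2 ⟨mem_univ _, rfl⟩
    calc #{b | (incGraph T).Adj a b ∧ b.rank r ≤ a.rank r}
        ≤ #(({b | b.1.1 = a.1.1} : Finset (Inc T)).erase a ∪
            ({b | b.other = a.1.1 ∧ T.dist r b.1.1 < T.dist r a.1.1} : Finset (Inc T))) :=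
          card_le_card fun b hb => by
            obtain ⟨hab, hrank⟩ := (mem_filter.1 hb).2
            rcases hT.incGraph_adj_fst_eq_or_parent r hab hup hrank with h | h
            · exact mem_union_left _ (mem_erase.2 ⟨hab.ne.symm, mem_filter.2 ⟨mem_univ _, h⟩⟩)
            · exact mem_union_right _ (mem_filter.2 ⟨mem_univ _, h⟩)
      _ ≤ (#({b | b.1.1 = a.1.1} : Finset (Inc T)) - 1) + 1 :=
          (card_union_le _ _).trans (add_le_add (card_erase_of_mem ha).le
            (hT.card_filter_other_eq_dist_lt_le_one r a.1.1))
      _ ≤ maxDeg T := by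
          have := card_filter_fst_eq_le_maxDeg (G := T) a.1.1
          have := card_pos.2 ⟨a, ha⟩
          omega

lemma rank_le_of_fst_eq_root {c : Inc T} (hc : c.1.1 = r) (a : Inc T) : c.rank r ≤ a.rank r := by
  have := hT.dist_ne_of_adj r (adj_other a)
  simp only [rank, hc, dist_self]
  split_ifs <;> omega

end SimpleGraph.IsTree

theorem stmt13 [Fintype V] (T : SimpleGraph V) (hT : T.IsTree) (k : ℕ) (hk : 1 ≤ k)
    (L : Inc T → Finset ℕ) (hL : ∀ i, maxDeg T + k ≤ (L i).card)
    (I : Fin k → Inc T) (hinj : Function.Injective I)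
    (α : Fin k → ℕ) (hmem : ∀ i, α i ∈ L (I i))
    (hdist : ∀ i j, (incGraph T).Adj (I i) (I j) → α i ≠ α j) :
    ∃ σ : Inc T → ℕ, (∀ a, σ a ∈ L a) ∧
      (∀ a b, (incGraph T).Adj a b → σ a ≠ σ b) ∧ ∀ i, σ (I i) = α i := by
  have : Nonempty (Fin k) := ⟨⟨0, hk⟩⟩
  set c := I ⟨0, hk⟩
  set P := univ.image I
  have hP : #P = k := by rw [card_image_of_injective _ hinj, card_univ, Fintype.card_fin]
  have hcP : c ∈ P := mem_image_of_mem I (mem_univ _)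
  have hinv : ∀ i, invFun I (I i) = i := leftInverse_invFun hinj
  have hpre : (incGraph T).IsListColoringOn L P (α ∘ invFun I) := by
    refine ⟨?_, ?_⟩ <;> simp only [P, forall_mem_image, mem_univ, true_implies]
    · simpa [hinv] using hmem
    · simpa [hinv] using hdist
  obtain ⟨σ, ⟨hσL, hσ⟩, hσP⟩ := exists_isListColoringOn_univ_extending P _ (Inc.rank c.1.1) hpre
    fun a _ => (card_filter_adj_and_mem_or_le_lt hcP (hT.rank_le_of_fst_eq_root _ rfl) a).trans_le
      (by
        rw [hP]
        exact (Nat.add_le_add_right (hT.card_filter_incGraph_adj_rank_le _ a) k).trans (hL a))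
  exact ⟨σ, fun a => hσL a (mem_univ a), fun a b => hσ a (mem_univ a) b (mem_univ b),
    fun i => by simpa [hinv] using hσP (I i) (mem_image_of_mem I (mem_univ i))⟩
end
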